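/- arXiv:2208.12520 — 2 statements merged into one kernel-verified Lean document; each statement's English description precedes it below -/
import Mathlib

section
/- Let F : ℝⁿ → Set ℝⁿ be upper semicontinuous with F(x) nonempty, compact, and convex for every x, let X_o, X_u ⊆ ℝⁿ, and let B : ℝⁿ → ℝ be a barrier function candidate with respect to (X_o, X_u) with zero-sublevel set K. If there exists a continuous function ε : ℝⁿ → (0,∞) such that K is forward invariant for the strongly perturbed system Σ^s_ε, and the boundary ∂K is bounded, then the system ẋ ∈ F(x) is uniformly strongly robustly safe with respect to (X_o, X_u). -/
open Metric Set Filter MeasureTheory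
open scoped Pointwise RealInnerProductSpace Topology

variable {E : Type*} [NormedAddCommGroup E] [NormedSpace ℝ E]

/-- Admissible solution domains: `[0,T]`, `[0,T)`, or `[0,∞)`. -/
def SolDomain (D : Set ℝ) : Prop :=
  (∃ T : ℝ, 0 ≤ T ∧ D = Set.Icc 0 T) ∨ (∃ T : ℝ, 0 < T ∧ D = Set.Ico 0 T) ∨ D = Set.Ici 0

/-- `φ` is a (locally absolutely continuous) solution of `ẋ ∈ F x` on `D`,
expressed in integral form: `φ t = φ 0 + ∫₀ᵗ v`, with `v t ∈ F (φ t)` a.e. on `D`. -/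
def IsSolutionOn (F : E → Set E) (φ : ℝ → E) (D : Set ℝ) : Prop :=
  SolDomain D ∧ ∃ v : ℝ → E,
    (∀ t ∈ D, MeasureTheory.IntegrableOn v (Set.Icc 0 t)) ∧
    (∀ t ∈ D, φ t = φ 0 + ∫ s in (0:ℝ)..t, v s) ∧
    (∀ᵐ t ∂(MeasureTheory.volume.restrict D), v t ∈ F (φ t))

/-- Safety: no solution starting in `Xo` ever reaches `Xu`. -/
def Safe (F : E → Set E) (Xo Xu : Set E) : Prop :=
  ∀ (φ : ℝ → E) (D : Set ℝ), IsSolutionOn F φ D → φ 0 ∈ Xo → ∀ t ∈ D, φ t ∉ Xu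

/-- Forward invariance of `K`. -/
def ForwardInvariant (F : E → Set E) (K : Set E) : Prop :=
  ∀ (φ : ℝ → E) (D : Set ℝ), IsSolutionOn F φ D → φ 0 ∈ K → ∀ t ∈ D, φ t ∈ K

/-- Image of a set under a set-valued map: `F(S) = ⋃_{y ∈ S} F(y)`. -/
def svImage (F : E → Set E) (S : Set E) : Set E := ⋃ y ∈ S, F y

/-- Right-hand side of the strongly perturbed system `Σ^s_ε`:
`conv (F (x + ε(x)𝔹)) + ε(x)𝔹`. -/
def strongPert (F : E → Set E) (ε : E → ℝ) (x : E) : Set E :=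
  convexHull ℝ (svImage F (Metric.closedBall x (ε x))) + Metric.closedBall (0:E) (ε x)

/-- Right-hand side of the (ordinary) perturbed system `Σ_ε`: `F x + ε(x)𝔹`. -/
def pert (F : E → Set E) (ε : E → ℝ) (x : E) : Set E :=
  F x + Metric.closedBall (0:E) (ε x)

def RobustlySafe (F : E → Set E) (Xo Xu : Set E) : Prop :=
  ∃ ε : E → ℝ, Continuous ε ∧ (∀ x, 0 < ε x) ∧ Safe (pert F ε) Xo Xu

def StronglyRobustlySafe (F : E → Set E) (Xo Xu : Set E) : Prop :=
  ∃ ε : E → ℝ, Continuous ε ∧ (∀ x, 0 < ε x) ∧ Safe (strongPert F ε) Xo Xu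

def UniformlyStronglyRobustlySafe (F : E → Set E) (Xo Xu : Set E) : Prop :=
  ∃ ε : ℝ, 0 < ε ∧ Safe (strongPert F (fun _ => ε)) Xo Xu

/-- Upper semicontinuity of a set-valued map. -/
def UpperSemicontinuousSV (F : E → Set E) : Prop :=
  ∀ x : E, ∀ U : Set E, IsOpen U → F x ⊆ U → ∀ᶠ y in nhds x, F y ⊆ U

/-- Lower semicontinuity of a set-valued map (sequential form). -/
def LowerSemicontinuousSV (F : E → Set E) : Prop :=
  ∀ x : E, ∀ y ∈ F x, ∀ u : ℕ → E, Filter.Tendsto u Filter.atTop (nhds x) →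
    ∃ v : ℕ → E, (∀ i, v i ∈ F (u i)) ∧ Filter.Tendsto v Filter.atTop (nhds y)

/-!
Since `frontier K` is bounded, `ε` has a positive minimum `ε₀` on a ball containing it, so by
continuity `ε > ε₀ / 2` near `frontier K`, where the perturbed right-hand side for the constant
`ε₀ / 2` is therefore contained in the one for `ε`. That suffices, because forward invariance
only depends on the dynamics near the frontier: a solution leaving `K` crosses `frontier K` at a
last time `u`; restarted at a time in `K` just before `u`, it is for a short while a solution of
the larger system, for which `K` is invariant, so it is still in `K` shortly after `u`.
-/

lemma strongPert_mono (F : E → Set E) {ε₁ ε₂ : E → ℝ} {x : E} (h : ε₁ x ≤ ε₂ x) :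
    strongPert F ε₁ x ⊆ strongPert F ε₂ x :=
  add_subset_add (convexHull_mono (biUnion_subset_biUnion_left (closedBall_subset_closedBall h)))
    (closedBall_subset_closedBall h)

namespace SolDomain

variable {D : Set ℝ}

lemma nonneg (hD : SolDomain D) {t : ℝ} (ht : t ∈ D) : 0 ≤ t := by
  rcases hD with ⟨T, -, rfl⟩ | ⟨T, -, rfl⟩ | rfl
  exacts [ht.1, ht.1, ht]

lemma Icc_subset (hD : SolDomain D) {t : ℝ} (ht : t ∈ D) : Icc 0 t ⊆ D := by
  rcases hD with ⟨T, -, rfl⟩ | ⟨T, -, rfl⟩ | rfl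
  · exact Icc_subset_Icc le_rfl ht.2
  · exact fun s hs => ⟨hs.1, hs.2.trans_lt ht.2⟩
  · exact fun s hs => hs.1

lemma measurableSet (hD : SolDomain D) : MeasurableSet D := by
  rcases hD with ⟨T, -, rfl⟩ | ⟨T, -, rfl⟩ | rfl
  exacts [measurableSet_Icc, measurableSet_Ico, measurableSet_Ici]

end SolDomain

namespace IsSolutionOn

variable {F G : E → Set E} {φ : ℝ → E} {D : Set ℝ}

lemma mono (h : IsSolutionOn F φ D) (hFG : ∀ t ∈ D, F (φ t) ⊆ G (φ t)) :
    IsSolutionOn G φ D := by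
  obtain ⟨hD, v, hint, heq, hae⟩ := h
  refine ⟨hD, v, hint, heq, ?_⟩
  filter_upwards [hae, ae_restrict_mem hD.measurableSet] with t hvt ht
  exact hFG t ht hvt

lemma continuousOn_Icc (h : IsSolutionOn F φ D) {t : ℝ} (ht : t ∈ D) :
    ContinuousOn φ (Icc 0 t) := by
  obtain ⟨hD, v, hint, heq, -⟩ := h
  have hprim := intervalIntegral.continuousOn_primitive_interval
    (μ := volume) (a := 0) (b := t) (f := v)
    (by rw [uIcc_of_le (hD.nonneg ht)]; exact hint t ht)
  rw [uIcc_of_le (hD.nonneg ht)] at hprim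
  exact (continuousOn_const.add hprim).congr fun s hs => heq s (hD.Icc_subset ht hs)

lemma comp_add (h : IsSolutionOn F φ D) {τ w : ℝ} (hτ : τ ∈ D) (hw : w ∈ D) (hτw : τ ≤ w) :
    IsSolutionOn F (fun r => φ (τ + r)) (Icc 0 (w - τ)) := by
  obtain ⟨hD, v, hint, heq, hae⟩ := h
  have hτ₀ := hD.nonneg hτ
  have hv : ∀ {a b}, 0 ≤ a → a ≤ b → b ≤ w → IntervalIntegrable v volume a b := fun ha hab hb =>
    (intervalIntegrable_iff_integrableOn_Icc_of_le hab).2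
      ((hint w hw).mono_set (Icc_subset_Icc ha hb))
  refine ⟨Or.inl ⟨w - τ, sub_nonneg.2 hτw, rfl⟩, fun r => v (τ + r), fun r hr => ?_,
    fun r hr => ?_, ?_⟩
  · have := (hv hτ₀ (le_add_of_nonneg_right hr.1) (by linarith [hr.2])).comp_add_left τ
    simp only [sub_self, add_sub_cancel_left] at this
    exact (intervalIntegrable_iff_integrableOn_Icc_of_le hr.1).1 this
  · have hτr : τ + r ∈ D := hD.Icc_subset hw ⟨by linarith [hr.1], by linarith [hr.2]⟩
    dsimp only
    rw [add_zero, heq _ hτr, heq _ hτ, add_assoc, intervalIntegral.integral_comp_add_left v τ,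
      add_zero, intervalIntegral.integral_add_adjacent_intervals (hv le_rfl hτ₀ hτw)
        (hv hτ₀ (le_add_of_nonneg_right hr.1) (by linarith [hr.2]))]
  · have hshift := (measurePreserving_add_left volume τ).quasiMeasurePreserving.ae
      ((ae_restrict_iff' hD.measurableSet).1 hae)
    refine (ae_restrict_iff' measurableSet_Icc).2 (hshift.mono fun r hr hrI => hr ?_)
    exact hD.Icc_subset hw ⟨by linarith [hrI.1], by linarith [hrI.2]⟩

end IsSolutionOn

lemma exists_frontier_crossing {X : Type*} [TopologicalSpace X] {φ : ℝ → X} {K : Set X} {t : ℝ}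
    (hφ : ContinuousOn φ (Icc 0 t)) (ht₀ : 0 ≤ t) (h0 : φ 0 ∈ K) (ht : φ t ∉ K) :
    ∃ u ∈ Icc 0 t, φ u ∈ frontier K ∧ (∀ s ∈ Ioc u t, φ s ∉ K) ∧
      ∀ δ > 0, ∃ τ ∈ Icc 0 u, u - δ < τ ∧ φ τ ∈ K := by
  set S := {s ∈ Icc 0 t | φ s ∈ K}
  have hS0 : (0 : ℝ) ∈ S := ⟨⟨le_rfl, ht₀⟩, h0⟩
  have hSbdd : BddAbove S := ⟨t, fun s hs => hs.1.2⟩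
  set u := sSup S
  have hu : u ∈ Icc 0 t := ⟨le_csSup hSbdd hS0, csSup_le ⟨0, hS0⟩ fun s hs => hs.1.2⟩
  have hafter : ∀ s ∈ Ioc u t, φ s ∉ K := fun s hs hsK =>
    (le_csSup hSbdd ⟨⟨hu.1.trans hs.1.le, hs.2⟩, hsK⟩).not_gt hs.1
  have hclK : φ u ∈ closure K :=
    closure_mono (image_subset_iff.2 fun s hs => hs.2)
      (((hφ u hu).mono fun s hs => hs.1).mem_closure_image (csSup_mem_closure ⟨0, hS0⟩ hSbdd))
  have hclKc : φ u ∈ closure Kᶜ := by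
    rcases hu.2.eq_or_lt with hut | hut
    · exact subset_closure (hut ▸ ht)
    · have hIoc : Ioc u t ⊆ Icc 0 t := fun s hs => ⟨hu.1.trans hs.1.le, hs.2⟩
      refine closure_mono (image_subset_iff.2 hafter : φ '' Ioc u t ⊆ Kᶜ)
        (((hφ u hu).mono hIoc).mem_closure_image ?_)
      rw [closure_Ioc hut.ne]
      exact ⟨le_rfl, hu.2⟩
  refine ⟨u, hu, ?_, hafter, fun δ hδ => ?_⟩
  · rw [frontier_eq_closure_inter_closure]
    exact ⟨hclK, hclKc⟩
  · obtain ⟨τ, hτS, hτ⟩ := exists_lt_of_lt_csSup ⟨0, hS0⟩ (sub_lt_self u hδ)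
    exact ⟨τ, ⟨hτS.1.1, le_csSup hSbdd hτS⟩, hτ, hτS.2⟩

theorem ForwardInvariant.of_eventually_subset_near_frontier {F G : E → Set E} {K : Set E}
    (hG : ForwardInvariant G K) (hFG : ∀ x ∈ frontier K, ∀ᶠ y in 𝓝 x, F y ⊆ G y) :
    ForwardInvariant F K := by
  intro φ D hφ h0 t ht
  by_contra htK
  have ht₀ := hφ.1.nonneg ht
  have hcont := hφ.continuousOn_Icc ht
  obtain ⟨u, hu, hfr, hafter, hbefore⟩ := exists_frontier_crossing hcont ht₀ h0 htK
  obtain ⟨δ, hδ, hnear⟩ := Metric.mem_nhdsWithin_iff.1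
    ((hcont u hu).tendsto.eventually (hFG _ hfr))
  obtain ⟨τ, hτ, hτδ, hτK⟩ := hbefore δ hδ
  set w := min t (u + δ / 2)
  have hτw : τ ≤ w := le_min (hτ.2.trans hu.2) (by linarith [hτ.2])
  have hwt : w ≤ t := min_le_left _ _
  have hD := hφ.1.Icc_subset ht
  have hFG_on : ∀ r ∈ Icc 0 (w - τ), F (φ (τ + r)) ⊆ G (φ (τ + r)) := fun r hr =>
    have hdist : dist (τ + r) u < δ := by
      rw [Real.dist_eq, abs_lt]
      constructor <;> linarith [hr.1, hr.2, min_le_right t (u + δ / 2)]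
    hnear ⟨hdist, by linarith [hr.1, hτ.1], by linarith [hr.2]⟩
  have hψ : IsSolutionOn G (fun r => φ (τ + r)) (Icc 0 (w - τ)) :=
    (hφ.comp_add (hD ⟨hτ.1, hτ.2.trans hu.2⟩) (hD ⟨hτ.1.trans hτw, hwt⟩) hτw).mono hFG_on
  have hwK : φ w ∈ K := by
    simpa using hG _ _ hψ (by simpa using hτK) (w - τ) ⟨sub_nonneg.2 hτw, le_rfl⟩
  rcases min_choice t (u + δ / 2) with hw | hw
  · exact htK (hw ▸ hwK)
  · exact hafter w ⟨by linarith, hwt⟩ hwK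

lemma ForwardInvariant.safe {F : E → Set E} {Xo Xu : Set E} {B : E → ℝ}
    (hF : ForwardInvariant F {x | B x ≤ 0}) (hBu : ∀ x ∈ Xu, 0 < B x) (hBo : ∀ x ∈ Xo, B x ≤ 0) :
    Safe F Xo Xu := fun φ D hφ h0 t ht hu =>
  (hF φ D hφ (hBo _ h0) t ht).not_gt (hBu _ hu)

theorem stmt5_general {n : ℕ} (F : EuclideanSpace ℝ (Fin n) → Set (EuclideanSpace ℝ (Fin n)))
    (Xo Xu : Set (EuclideanSpace ℝ (Fin n))) (B : EuclideanSpace ℝ (Fin n) → ℝ)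
    (hBu : ∀ x ∈ Xu, 0 < B x) (hBo : ∀ x ∈ Xo, B x ≤ 0)
    (ε : EuclideanSpace ℝ (Fin n) → ℝ) (hεc : Continuous ε) (hεpos : ∀ x, 0 < ε x)
    (hInv : ForwardInvariant (strongPert F ε) {x | B x ≤ 0})
    (hbd : Bornology.IsBounded (frontier {x | B x ≤ 0})) :
    UniformlyStronglyRobustlySafe F Xo Xu := by
  obtain ⟨R, hR, hfr⟩ := hbd.subset_closedBall_lt 0 0
  obtain ⟨x₀, -, hmin⟩ := (isCompact_closedBall (0 : EuclideanSpace ℝ (Fin n)) R).exists_isMinOn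
    (nonempty_closedBall.2 hR.le) hεc.continuousOn
  refine ⟨ε x₀ / 2, half_pos (hεpos x₀), ?_⟩
  refine (hInv.of_eventually_subset_near_frontier fun x hx => ?_).safe hBu hBo
  have hεx : ε x₀ / 2 < ε x := (half_lt_self (hεpos x₀)).trans_le (hmin (hfr hx))
  filter_upwards [hεc.continuousAt.eventually (lt_mem_nhds hεx)] with y hy
  exact strongPert_mono F hy.le

/-- If the zero-sublevel set `K` of a barrier function candidate is forward
invariant for `Σ^s_ε` for some continuous positive `ε`, and `∂K` is bounded, then
`ẋ ∈ F x` is uniformly strongly robustly safe. -/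
theorem stmt5 {n : ℕ} (F : EuclideanSpace ℝ (Fin n) → Set (EuclideanSpace ℝ (Fin n)))
    (hFusc : UpperSemicontinuousSV F)
    (hFne : ∀ x, (F x).Nonempty) (hFcpt : ∀ x, IsCompact (F x)) (hFcvx : ∀ x, Convex ℝ (F x))
    (Xo Xu : Set (EuclideanSpace ℝ (Fin n))) (B : EuclideanSpace ℝ (Fin n) → ℝ)
    (hBu : ∀ x ∈ Xu, 0 < B x) (hBo : ∀ x ∈ Xo, B x ≤ 0)
    (ε : EuclideanSpace ℝ (Fin n) → ℝ) (hεc : Continuous ε) (hεpos : ∀ x, 0 < ε x)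
    (hInv : ForwardInvariant (strongPert F ε) {x | B x ≤ 0})
    (hbd : Bornology.IsBounded (frontier {x | B x ≤ 0})) :
    UniformlyStronglyRobustlySafe F Xo Xu :=
  stmt5_general F Xo Xu B hBu hBo ε hεc hεpos hInv hbd
end

section
/- Let F : ℝⁿ → Set ℝⁿ be upper semicontinuous with F(x) nonempty, compact, and convex for every x, let X_o, X_u ⊆ ℝⁿ, and let B : ℝⁿ → ℝ be a continuously differentiable barrier function candidate with respect to (X_o, X_u) with zero-sublevel set K and with ∇B(x) ≠ 0 for all x ∈ ∂K. Suppose there exist a continuous function λ₂ : ℝⁿ → [0,∞) and a continuous function λ₁ : ℝ → [0,∞) with λ₁(0) = 0 such that F(x + δ𝔹) ⊆ F(x) + λ₁(δ)λ₂(x)𝔹 for every x ∈ ∂K and every δ > 0. If inf { ⟨∇B(x), −η⟩ / ( |∇B(x)| (1 + λ₂(x)) ) : x ∈ ∂K, η ∈ F(x) } > 0, then the system ẋ ∈ F(x) is uniformly strongly robustly safe with respect to (X_o, X_u). -/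
/-!
Write `K = {B ≤ 0}`. A solution of the perturbed system that starts in `K` and leaves it has a
last time `s` in `K`, and `x = φ s` lies on `∂K`. The modulus hypothesis with `δ = 2ε` puts
`F(y + ε𝔹)` inside `F(x) + σ λ₂(x) 𝔹` for `y` near `x`, and the normalisation by `1 + λ₂(x)` in
the infimum is exactly what keeps this set in the half-space `⟪∇B x, ·⟫ ≤ -σ ‖∇B x‖`. Taking
convex hulls and adding `ε𝔹` with `ε ≤ σ / 2` loses at most half of that margin, and as the set is
bounded, continuity of `∇B` gives `⟪∇B z, w⟫ ≤ 0` for all `z` near `x` and all admissible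
velocities `w` at points near `x`. The mean value theorem then shows that `B ∘ φ` does not increase
right after `s`, a contradiction. Since `ε` depends only on `σ` and `λ₁`, it is uniform.
-/

open Metric Set Filter MeasureTheory
open scoped Pointwise RealInnerProductSpace Topology

variable {E : Type*} [NormedAddCommGroup E] [NormedSpace ℝ E]

theorem SolDomain.subset_Ici {D : Set ℝ} (hD : SolDomain D) : D ⊆ Ici 0 := by
  rcases hD with ⟨T, -, rfl⟩ | ⟨T, -, rfl⟩ | rfl
  · exact Icc_subset_Ici_self
  · exact Ico_subset_Ici_self
  · exact subset_rfl

theorem SolDomain.Icc_subset_s7 {D : Set ℝ} (hD : SolDomain D) {t : ℝ} (ht : t ∈ D) :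
    Icc 0 t ⊆ D := by
  rcases hD with ⟨T, -, rfl⟩ | ⟨T, -, rfl⟩ | rfl
  · exact Icc_subset_Icc le_rfl ht.2
  · exact fun u hu => ⟨hu.1, hu.2.trans_lt ht.2⟩
  · exact fun u hu => hu.1

theorem IsSolutionOn.continuousOn_Icc_s7 {F : E → Set E} {φ : ℝ → E} {D : Set ℝ}
    (hφ : IsSolutionOn F φ D) {t : ℝ} (ht : t ∈ D) :
    ContinuousOn φ (Icc 0 t) := by
  obtain ⟨hD, v, hint, heq, -⟩ := hφ
  refine ((continuousOn_const (c := φ 0)).add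
    (intervalIntegral.continuousOn_primitive (hint t ht))).congr fun u hu => ?_
  rw [heq u (hD.Icc_subset_s7 ht hu), intervalIntegral.integral_of_le hu.1]
  rfl

theorem svImage_mono {α : Type*} {F : α → Set α} {S T : Set α} (h : S ⊆ T) :
    svImage F S ⊆ svImage F T :=
  biUnion_subset_biUnion_left h

theorem IsClosed.exists_frontier_last_mem {X : Type*} [TopologicalSpace X] {K : Set X}
    (hK : IsClosed K) {φ : ℝ → X} {a b : ℝ} (hab : a ≤ b) (hφ : ContinuousOn φ (Icc a b))
    (ha : φ a ∈ K) (hb : φ b ∉ K) :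
    ∃ s ∈ Ico a b, φ s ∈ frontier K ∧ ∀ u ∈ Ioc s b, φ u ∉ K := by
  set S := Icc a b ∩ φ ⁻¹' K
  have hbdd : BddAbove S := ⟨b, fun u hu => hu.1.2⟩
  obtain ⟨⟨has, hsb⟩, hs⟩ : sSup S ∈ S :=
    (hφ.preimage_isClosed_of_isClosed isClosed_Icc hK).csSup_mem ⟨a, ⟨le_rfl, hab⟩, ha⟩ hbdd
  have hsb' : sSup S < b := hsb.lt_of_ne fun h => hb (h ▸ hs)
  have hout : ∀ u ∈ Ioc (sSup S) b, φ u ∉ K := fun u hu huK =>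
    hu.1.not_ge (le_csSup hbdd ⟨⟨has.trans hu.1.le, hu.2⟩, huK⟩)
  refine ⟨sSup S, ⟨has, hsb'⟩, ?_, hout⟩
  rw [frontier_eq_closure_inter_closure, hK.closure_eq]
  have := left_nhdsWithin_Ioc_neBot hsb'
  exact ⟨hs, mem_closure_of_tendsto ((hφ _ ⟨has, hsb⟩).tendsto.mono_left
    (nhdsWithin_mono _ fun u hu => ⟨has.trans hu.1.le, hu.2⟩))
    (eventually_mem_nhdsWithin.mono hout)⟩

theorem exists_pos_le_half_and_apply_two_mul_le {f : ℝ → ℝ} (hf : ContinuousAt f 0)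
    (hf0 : f 0 = 0) {σ : ℝ} (hσ : 0 < σ) : ∃ ε > 0, ε ≤ σ / 2 ∧ f (2 * ε) ≤ σ := by
  have hlim : Tendsto (fun ε => f (2 * ε)) (𝓝[>] 0) (𝓝 0) := by
    have := hf.tendsto.comp ((continuous_const_mul (2 : ℝ)).tendsto' 0 0 (mul_zero 2))
    rw [hf0] at this
    exact this.mono_left nhdsWithin_le_nhds
  obtain ⟨ε, ⟨hfε, hε⟩, hεσ⟩ := ((hlim.eventually (Iic_mem_nhds hσ)).and self_mem_nhdsWithin
    |>.and (mem_nhdsWithin_of_mem_nhds (Iic_mem_nhds (half_pos hσ)))).exists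
  exact ⟨ε, hε, hεσ, hfε⟩

section HalfSpace

variable {V : Type*} [NormedAddCommGroup V] [InnerProductSpace ℝ V]

theorem add_closedBall_subset_inter_closedBall {A : Set V} {g : V} {a R ρ : ℝ}
    (hA : A ⊆ {w | ⟪g, w⟫ ≤ a} ∩ closedBall 0 R) :
    A + closedBall 0 ρ ⊆ {w | ⟪g, w⟫ ≤ a + ‖g‖ * ρ} ∩ closedBall 0 (R + ρ) := by
  rintro _ ⟨η, hη, b, hb, rfl⟩
  obtain ⟨hηg, hηR⟩ := hA hη
  rw [mem_closedBall_zero_iff] at hb hηR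
  refine ⟨?_, mem_closedBall_zero_iff.2 ((norm_add_le η b).trans (add_le_add hηR hb))⟩
  have hgb : ⟪g, b⟫ ≤ ‖g‖ * ρ :=
    (real_inner_le_norm g b).trans (mul_le_mul_of_nonneg_left hb (norm_nonneg g))
  have hηg' : ⟪g, η⟫ ≤ a := hηg
  change ⟪g, η + b⟫ ≤ _
  rw [inner_add_right]
  linarith

theorem inner_le_of_mem_inter_closedBall {g w : V} {a R : ℝ}
    (hw : w ∈ {w | ⟪g, w⟫ ≤ a} ∩ closedBall 0 R) (g' : V) :
    ⟪g', w⟫ ≤ a + ‖g' - g‖ * R := by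
  have hdiff : ⟪g' - g, w⟫ ≤ ‖g' - g‖ * R := (real_inner_le_norm _ _).trans
    (mul_le_mul_of_nonneg_left (mem_closedBall_zero_iff.1 hw.2) (norm_nonneg _))
  have hgw : ⟪g, w⟫ ≤ a := hw.1
  rw [inner_sub_left] at hdiff
  linarith

theorem add_closedBall_subset_of_le_inner_div {A : Set V} {g : V} {σ ℓ ρ M : ℝ} (hg : g ≠ 0)
    (hℓ : 0 ≤ ℓ) (hA : ∀ η ∈ A, σ ≤ ⟪g, -η⟫ / (‖g‖ * (1 + ℓ))) (hAM : A ⊆ closedBall 0 M)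
    (hρ : ρ ≤ σ * ℓ) :
    A + closedBall 0 ρ ⊆ {w | ⟪g, w⟫ ≤ -(σ * ‖g‖)} ∩ closedBall 0 (M + σ * ℓ) := by
  have hgpos : 0 < ‖g‖ := norm_pos_iff.2 hg
  have hA' : A ⊆ {w | ⟪g, w⟫ ≤ -(σ * (‖g‖ * (1 + ℓ)))} ∩ closedBall 0 M := fun η hη => by
    have := hA η hη
    rw [le_div_iff₀ (by positivity), inner_neg_right] at this
    exact ⟨show ⟪g, η⟫ ≤ _ by linarith, hAM hη⟩
  refine (add_closedBall_subset_inter_closedBall hA').trans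
    (inter_subset_inter (fun w hw => ?_) (closedBall_subset_closedBall (by linarith)))
  have hgw : ⟪g, w⟫ ≤ -(σ * (‖g‖ * (1 + ℓ))) + ‖g‖ * ρ := hw
  have := mul_le_mul_of_nonneg_left hρ hgpos.le
  change ⟪g, w⟫ ≤ _
  linarith

end HalfSpace

section Gradient

variable {V : Type*} [NormedAddCommGroup V] [InnerProductSpace ℝ V] [CompleteSpace V]

theorem ContDiff.continuous_gradient {B : V → ℝ} (hB : ContDiff ℝ 1 B) :
    Continuous (gradient B) :=
  (InnerProductSpace.toDual ℝ V).symm.continuous.comp (hB.continuous_fderiv one_ne_zero)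

theorem IsSolutionOn.inner_sub_nonpos {F : V → Set V} {φ : ℝ → V} {D : Set ℝ}
    (hφ : IsSolutionOn F φ D) {s u : ℝ} (hs : 0 ≤ s) (hsu : s ≤ u) (hu : u ∈ D) {g : V}
    (hg : ∀ r ∈ Ioc s u, ∀ w ∈ F (φ r), ⟪g, w⟫ ≤ 0) : ⟪g, φ u - φ s⟫ ≤ 0 := by
  obtain ⟨hD, v, hint, heq, hae⟩ := hφ
  have hIcc := hD.Icc_subset_s7 hu
  have hsD : s ∈ D := hIcc ⟨hs, hsu⟩
  have hvs : IntervalIntegrable v volume 0 s :=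
    (intervalIntegrable_iff_integrableOn_Icc_of_le hs).2 (hint s hsD)
  have hvu : IntervalIntegrable v volume 0 u :=
    (intervalIntegrable_iff_integrableOn_Icc_of_le (hs.trans hsu)).2 (hint u hu)
  have hvsu : IntegrableOn v (Ioc s u) :=
    (hint u hu).mono_set (Ioc_subset_Icc_self.trans (Icc_subset_Icc_left hs))
  rw [heq u hu, heq s hsD, add_sub_add_left_eq_sub,
    intervalIntegral.integral_interval_sub_left hvu hvs, intervalIntegral.integral_of_le hsu,
    ← integral_inner hvsu]
  refine integral_nonpos_of_ae ?_
  have hsub : Ioc s u ⊆ D := fun r hr => hIcc ⟨hs.trans hr.1.le, hr.2⟩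
  filter_upwards [ae_restrict_mem measurableSet_Ioc,
    ae_mono (Measure.restrict_mono hsub le_rfl) hae] with r hr hvr
  exact hg r hr _ hvr

theorem IsSolutionOn.apply_le_of_inner_gradient_nonpos {G : V → Set V} {φ : ℝ → V} {D : Set ℝ}
    {B : V → ℝ} {C : Set V} (hB : Differentiable ℝ B) (hC : Convex ℝ C)
    (hφ : IsSolutionOn G φ D) {s u : ℝ} (hs : 0 ≤ s) (hsu : s ≤ u) (hu : u ∈ D)
    (hφC : ∀ r ∈ Icc s u, φ r ∈ C) (hdesc : ∀ z ∈ C, ∀ y ∈ C, ∀ w ∈ G y, ⟪gradient B z, w⟫ ≤ 0) :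
    B (φ u) ≤ B (φ s) := by
  obtain ⟨z, hz, hmvt⟩ := domain_mvt (fun x _ => (hB x).hasFDerivAt.hasFDerivWithinAt) hC
    (hφC s ⟨le_rfl, hsu⟩) (hφC u ⟨hsu, le_rfl⟩)
  have hzC : z ∈ C := hC.segment_subset (hφC s ⟨le_rfl, hsu⟩) (hφC u ⟨hsu, le_rfl⟩) hz
  have := hφ.inner_sub_nonpos hs hsu hu fun r hr w hw =>
    hdesc z hzC (φ r) (hφC r ⟨hr.1.le, hr.2⟩) w hw
  rw [inner_gradient_left] at this
  linarith

theorem safe_of_inner_gradient_nonpos_near_frontier {G : V → Set V} {B : V → ℝ}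
    {Xo Xu : Set V} (hB : Differentiable ℝ B) (hBu : ∀ x ∈ Xu, 0 < B x)
    (hBo : ∀ x ∈ Xo, B x ≤ 0)
    (hloc : ∀ x ∈ frontier {y | B y ≤ 0}, ∃ r > 0,
      ∀ z ∈ closedBall x r, ∀ y ∈ closedBall x r, ∀ w ∈ G y, ⟪gradient B z, w⟫ ≤ 0) :
    Safe G Xo Xu := by
  intro φ D hφ h0 t ht htu
  have hK : IsClosed {y | B y ≤ 0} := isClosed_le hB.continuous continuous_const
  have hφc := hφ.continuousOn_Icc_s7 ht
  obtain ⟨s, ⟨hs, hst⟩, hfr, hout⟩ := hK.exists_frontier_last_mem (hφ.1.subset_Ici ht) hφc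
    (hBo _ h0) (hBu _ htu).not_ge
  obtain ⟨r, hr, hdesc⟩ := hloc _ hfr
  have hφs : ContinuousWithinAt φ (Ici s) s := (hφc s ⟨hs, hst.le⟩).mono_of_mem_nhdsWithin
    (mem_of_superset (Icc_mem_nhdsGE hst) (Icc_subset_Icc_left hs))
  obtain ⟨u, hsu, hu⟩ := mem_nhdsGE_iff_exists_Icc_subset.1
    (inter_mem (hφs (closedBall_mem_nhds _ hr)) (mem_nhdsWithin_of_mem_nhds (Iic_mem_nhds hst)))
  have hut : u ≤ t := (hu ⟨hsu.le, le_rfl⟩).2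
  have hle := hφ.apply_le_of_inner_gradient_nonpos hB (convex_closedBall _ _) hs hsu.le
    (hφ.1.Icc_subset_s7 ht ⟨hs.trans hsu.le, hut⟩) (fun r hr => (hu hr).1) hdesc
  exact hout u ⟨hsu, hut⟩ (hle.trans (hK.frontier_subset hfr))

theorem exists_closedBall_inner_gradient_strongPert_nonpos {F : V → Set V} {B : V → ℝ} {x : V}
    {σ ε R : ℝ} (hB : Continuous (gradient B)) (hg : gradient B x ≠ 0) (hσ : 0 < σ)
    (hε : 0 < ε) (hεσ : ε ≤ σ / 2)
    (hS : svImage F (closedBall x (2 * ε)) ⊆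
      {w | ⟪gradient B x, w⟫ ≤ -(σ * ‖gradient B x‖)} ∩ closedBall 0 R) :
    ∃ r > 0, ∀ z ∈ closedBall x r, ∀ y ∈ closedBall x r, ∀ w ∈ strongPert F (fun _ => ε) y,
      ⟪gradient B z, w⟫ ≤ 0 := by
  set g := gradient B x
  have hgpos : 0 < ‖g‖ := norm_pos_iff.2 hg
  have hnear : ∀ᶠ z in 𝓝 x, ‖gradient B z - g‖ * (R + ε) < σ * ‖g‖ / 2 := by
    have := ((hB.tendsto x).sub_const g).norm.mul_const (R + ε)
    rw [sub_self, norm_zero, zero_mul] at this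
    exact this.eventually (gt_mem_nhds (by positivity))
  obtain ⟨r₁, hr₁, hr₁near⟩ := nhds_basis_closedBall.eventually_iff.1 hnear
  refine ⟨min ε r₁, lt_min hε hr₁, fun z hz y hy w hw => ?_⟩
  have hball : closedBall y ε ⊆ closedBall x (2 * ε) := closedBall_subset_closedBall'
    (by linarith [mem_closedBall.1 hy, min_le_left ε r₁])
  have hconv : convexHull ℝ (svImage F (closedBall y ε)) ⊆
      {w | ⟪g, w⟫ ≤ -(σ * ‖g‖)} ∩ closedBall 0 R :=
    convexHull_min ((svImage_mono hball).trans hS)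
      ((convex_halfSpace_le (innerₛₗ ℝ g).isLinear _).inter (convex_closedBall _ _))
  have hzw : ⟪gradient B z, w⟫ ≤ -(σ * ‖g‖) + ‖g‖ * ε + ‖gradient B z - g‖ * (R + ε) :=
    inner_le_of_mem_inter_closedBall (add_closedBall_subset_inter_closedBall hconv hw) _
  have hz' := hr₁near (closedBall_subset_closedBall (min_le_right _ _) hz)
  have := mul_le_mul_of_nonneg_left hεσ hgpos.le
  linarith

end Gradient

theorem stmt7_general {n : ℕ} (F : EuclideanSpace ℝ (Fin n) → Set (EuclideanSpace ℝ (Fin n)))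
    (hFcpt : ∀ x, IsCompact (F x))
    (Xo Xu : Set (EuclideanSpace ℝ (Fin n))) (B : EuclideanSpace ℝ (Fin n) → ℝ)
    (hB : ContDiff ℝ 1 B) (hBu : ∀ x ∈ Xu, 0 < B x) (hBo : ∀ x ∈ Xo, B x ≤ 0)
    (hgradne : ∀ x ∈ frontier {y | B y ≤ 0}, gradient B x ≠ 0)
    (lam1 : ℝ → ℝ) (hlam1c : Continuous lam1) (hlam10 : lam1 0 = 0)
    (lam2 : EuclideanSpace ℝ (Fin n) → ℝ) (hlam2nn : ∀ x, 0 ≤ lam2 x)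
    (hmod : ∀ x ∈ frontier {y | B y ≤ 0}, ∀ δ > (0:ℝ),
      svImage F (Metric.closedBall x δ) ⊆ F x + Metric.closedBall 0 (lam1 δ * lam2 x))
    (hinf : ∃ σ > (0:ℝ), ∀ x ∈ frontier {y | B y ≤ 0}, ∀ η ∈ F x,
      σ ≤ ⟪gradient B x, -η⟫ / (‖gradient B x‖ * (1 + lam2 x))) :
    UniformlyStronglyRobustlySafe F Xo Xu := by
  obtain ⟨σ, hσ, hσle⟩ := hinf
  obtain ⟨ε, hε, hεσ, hlam1ε⟩ :=
    exists_pos_le_half_and_apply_two_mul_le hlam1c.continuousAt hlam10 hσ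
  refine ⟨ε, hε, safe_of_inner_gradient_nonpos_near_frontier (hB.differentiable one_ne_zero)
    hBu hBo fun x hx => ?_⟩
  obtain ⟨M, hM⟩ := (hFcpt x).isBounded.subset_closedBall 0
  exact exists_closedBall_inner_gradient_strongPert_nonpos hB.continuous_gradient
    (hgradne x hx) hσ hε hεσ ((hmod x hx _ (by positivity)).trans
      (add_closedBall_subset_of_le_inner_div (hgradne x hx) (hlam2nn x) (hσle x hx) hM
        (mul_le_mul_of_nonneg_right hlam1ε (hlam2nn x))))

/-- Under the modulus-of-continuity assumption
`F(x + δ𝔹) ⊆ F(x) + λ₁(δ)λ₂(x)𝔹` on `∂K`, if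
`inf { ⟨∇B x, -η⟩ / (|∇B x| (1 + λ₂ x)) : x ∈ ∂K, η ∈ F x } > 0`,
then `ẋ ∈ F x` is uniformly strongly robustly safe. -/
theorem stmt7 {n : ℕ} (F : EuclideanSpace ℝ (Fin n) → Set (EuclideanSpace ℝ (Fin n)))
    (hFusc : UpperSemicontinuousSV F)
    (hFne : ∀ x, (F x).Nonempty) (hFcpt : ∀ x, IsCompact (F x)) (hFcvx : ∀ x, Convex ℝ (F x))
    (Xo Xu : Set (EuclideanSpace ℝ (Fin n))) (B : EuclideanSpace ℝ (Fin n) → ℝ)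
    (hB : ContDiff ℝ 1 B) (hBu : ∀ x ∈ Xu, 0 < B x) (hBo : ∀ x ∈ Xo, B x ≤ 0)
    (hgradne : ∀ x ∈ frontier {y | B y ≤ 0}, gradient B x ≠ 0)
    (lam1 : ℝ → ℝ) (hlam1c : Continuous lam1) (hlam1nn : ∀ δ, 0 ≤ lam1 δ) (hlam10 : lam1 0 = 0)
    (lam2 : EuclideanSpace ℝ (Fin n) → ℝ) (hlam2c : Continuous lam2) (hlam2nn : ∀ x, 0 ≤ lam2 x)
    (hmod : ∀ x ∈ frontier {y | B y ≤ 0}, ∀ δ > (0:ℝ),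
      svImage F (Metric.closedBall x δ) ⊆ F x + Metric.closedBall 0 (lam1 δ * lam2 x))
    (hinf : ∃ σ > (0:ℝ), ∀ x ∈ frontier {y | B y ≤ 0}, ∀ η ∈ F x,
      σ ≤ ⟪gradient B x, -η⟫ / (‖gradient B x‖ * (1 + lam2 x))) :
    UniformlyStronglyRobustlySafe F Xo Xu :=
  stmt7_general F hFcpt Xo Xu B hB hBu hBo hgradne lam1 hlam1c hlam10 lam2 hlam2nn hmod hinf
end
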